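/- Let γ ∈ (-1,1) and define φ_s(θ) = arctan((4(1-γ) sin θ cos θ - π(1+γ))/(4(1-γ) cos²θ)) for θ ∈ (-π/2, π/2). Then φ_s is strictly increasing on a neighborhood of θ = 0; in particular, if θ > 0 is sufficiently small then φ_s(θ) > φ_s(0), i.e., a positive shaping-filter phase at the bandwidth frequency introduces a positive phase lead to the shaped Clegg Integrator. -/

import Mathlib

/-! Dividing numerator and denominator by `4 (1 - γ) cos² θ` and using
`1 / cos² θ = 1 + tan² θ` gives `φ_s(θ) = arctan (g (tan θ))` with `g t = t - c (1 + t²)` and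
`c = π (1 + γ) / (4 (1 - γ)) > 0`. The concave parabola `g` increases up to its vertex
`t = 1 / (2c)`, so `φ_s` is strictly increasing on `(-ε, ε)` with `ε = arctan (1 / (2c))`. -/

open Real Set

lemma strictMonoOn_sub_mul_one_add_sq (c : ℝ) :
    StrictMonoOn (fun t : ℝ => t - c * (1 + t ^ 2)) {t | 2 * c * t < 1} := by
  intro a ha b hb hab
  have hdiff : (b - c * (1 + b ^ 2)) - (a - c * (1 + a ^ 2)) = (b - a) * (1 - c * (a + b)) := by
    ring
  have hslope : 0 < 1 - c * (a + b) := by linarith [ha.out, hb.out]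
  have := mul_pos (sub_pos.mpr hab) hslope
  dsimp only
  linarith

lemma sin_mul_cos_sub_div_cos_sq {a b θ : ℝ} (ha : a ≠ 0) (hθ : cos θ ≠ 0) :
    (a * sin θ * cos θ - b) / (a * cos θ ^ 2) = tan θ - b / a * (1 + tan θ ^ 2) := by
  rw [tan_eq_sin_div_cos]
  field_simp
  linear_combination b * sin_sq_add_cos_sq θ

lemma tan_lt_of_lt_arctan {r θ : ℝ} (hθ : -(π / 2) < θ) (hr : θ < arctan r) : tan θ < r := by
  have hθ' : θ < π / 2 := hr.trans (arctan_lt_pi_div_two r)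
  simpa only [tan_arctan] using strictMonoOn_tan ⟨hθ, hθ'⟩
    ⟨neg_pi_div_two_lt_arctan r, arctan_lt_pi_div_two r⟩ hr

theorem shaped_CI_phase_lead_near_zero
    (γ : ℝ) (hγ : γ ∈ Set.Ioo (-1 : ℝ) 1)
    (φs : ℝ → ℝ)
    (hφs : ∀ θ, φs θ = Real.arctan
      ((4 * (1 - γ) * Real.sin θ * Real.cos θ - π * (1 + γ)) / (4 * (1 - γ) * (Real.cos θ) ^ 2))) :
    ∃ ε > 0, StrictMonoOn φs (Set.Ioo (-ε) ε) ∧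
      ∀ θ, 0 < θ → θ < ε → φs 0 < φs θ := by
  obtain ⟨hγl, hγu⟩ := hγ
  set c := π * (1 + γ) / (4 * (1 - γ))
  have hc : 0 < c := div_pos (mul_pos pi_pos (by linarith)) (by linarith)
  set ε := arctan (2 * c)⁻¹
  have hε : 0 < ε := arctan_pos.mpr (by positivity)
  have hsub : Ioo (-ε) ε ⊆ Ioo (-(π / 2)) (π / 2) :=
    Ioo_subset_Ioo (neg_le_neg (arctan_lt_pi_div_two _).le) (arctan_lt_pi_div_two _).le
  have hmaps : MapsTo tan (Ioo (-ε) ε) {t | 2 * c * t < 1} := fun θ hθ => by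
    have := mul_lt_mul_of_pos_left (tan_lt_of_lt_arctan (hsub hθ).1 hθ.2)
      (by positivity : 0 < 2 * c)
    rwa [mul_inv_cancel₀ (by positivity)] at this
  have hφ : EqOn (arctan ∘ (fun t => t - c * (1 + t ^ 2)) ∘ tan) φs (Ioo (-ε) ε) := fun θ hθ => by
    rw [hφs, sin_mul_cos_sub_div_cos_sq (by linarith) (cos_pos_of_mem_Ioo (hsub hθ)).ne']
    rfl
  have hmono : StrictMonoOn φs (Ioo (-ε) ε) :=
    (arctan_strictMono.comp_strictMonoOn
      ((strictMonoOn_sub_mul_one_add_sq c).comp (strictMonoOn_tan.mono hsub) hmaps)).congr hφ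
  exact ⟨ε, hε, hmono, fun θ h0 hθ => hmono ⟨by linarith, hε⟩ ⟨by linarith, hθ⟩ h0⟩
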